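/- arXiv:2505.12561 — 3 statements merged into one kernel-verified Lean document; each statement's English description precedes it below -/
import Mathlib

section
/- The map sending the right coset R(r, w)·S¹ (with r ≥ 0, r² + |w|² = 1) to the point (1 - 2r², 2rw) ∈ ℝ × ℂ is a well-defined homeomorphism from SU(2)/S¹ onto the unit 2-sphere S² = {(t,v) ∈ ℝ × ℂ : t² + |v|² = 1}, where S¹ is embedded as the subgroup of diagonal matrices d(z) = R(z,0). -/
/-
Every element of `SU(2)` is `R(a,b)` with `|a|² + |b|² = 1`, and `R(a,b) d(z) = R(az, bz̄)`, so the
Hopf map `R(a,b) ↦ (1 - 2|a|², 2ab)` lands in `S²` and is constant on cosets. If `M` and `M'` have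
the same image then `|a| = |a'|` and `ab = a'b'`, which force the off-diagonal entry `āb' - bā'` of
`M⁻¹M'` to vanish; so `M⁻¹M'` is diagonal and `M, M'` lie in the same coset. A point `(t, v)` with
`t ≠ 1` is the image of `R(r, v/2r)`, `r = √((1 - t)/2)`. The induced map on the quotient is a
continuous bijection from a compact space (`SU(2)` is closed and bounded) to a Hausdorff one, hence
a homeomorphism.
-/

open Complex Matrix

/-- `R(a,b)`: the 2×2 complex matrix with first row `(a, b)` and second row `(-b̄, ā)`. -/
def Rm (a b : ℂ) : Matrix (Fin 2) (Fin 2) ℂ :=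
  !![a, b; -(starRingEnd ℂ) b, (starRingEnd ℂ) a]

lemma Rm_one : Rm 1 0 = 1 := by
  ext i j; fin_cases i <;> fin_cases j <;> simp [Rm, Matrix.one_apply]

lemma Rm_mul_Rm (z w : ℂ) : Rm z 0 * Rm w 0 = Rm (z * w) 0 := by
  ext i j
  fin_cases i <;> fin_cases j <;>
    simp [Rm, Matrix.mul_apply, Fin.sum_univ_two, _root_.map_mul]

/-- The group `SU(2)`, as a subtype of 2×2 complex matrices (with the subspace topology). -/
abbrev SU2 : Type := {M : Matrix (Fin 2) (Fin 2) ℂ // M ∈ Matrix.specialUnitaryGroup (Fin 2) ℂ}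

/-- The equivalence relation on `SU(2)` whose classes are the right cosets of the circle
subgroup `{d(z) = R(z,0) : z ∈ S¹}` of diagonal matrices. -/
def cosetSetoid : Setoid SU2 where
  r A B := ∃ z : ℂ, ‖z‖ = 1 ∧
    (B : Matrix (Fin 2) (Fin 2) ℂ) = (A : Matrix (Fin 2) (Fin 2) ℂ) * Rm z 0
  iseqv := by
    constructor
    · exact fun A => ⟨1, by simp, by rw [Rm_one, mul_one]⟩
    · rintro A B ⟨z, hz, hB⟩
      have h1 : z * starRingEnd ℂ z = 1 := by
        rw [Complex.mul_conj]
        norm_cast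
        rw [Complex.normSq_eq_norm_sq, hz]; norm_num
      exact ⟨starRingEnd ℂ z, by simpa using hz,
        by rw [hB, mul_assoc, Rm_mul_Rm, h1, Rm_one, mul_one]⟩
    · rintro A B C ⟨z, hz, hB⟩ ⟨w, hw, hC⟩
      exact ⟨z * w, by rw [norm_mul, hz, hw]; norm_num,
        by rw [hC, hB, mul_assoc, Rm_mul_Rm]⟩

/-- The unit 2-sphere `S² = {(t,v) ∈ ℝ × ℂ : t² + |v|² = 1}`. -/
abbrev S2 : Type := {p : ℝ × ℂ // p.1 ^ 2 + Complex.normSq p.2 = 1}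

open ComplexConjugate

theorem det_Rm (a b : ℂ) : (Rm a b).det = (normSq a + normSq b : ℝ) := by
  simp only [Rm, det_fin_two_of, ofReal_add, ← mul_conj]
  ring

theorem Rm_mul_star (a b : ℂ) : Rm a b * star (Rm a b) = (normSq a + normSq b : ℝ) • 1 := by
  ext i j
  fin_cases i <;> fin_cases j <;>
    simp [Rm, mul_apply, Fin.sum_univ_two, star_apply, ← mul_conj] <;> ring

theorem Rm_mem_specialUnitaryGroup_iff {a b : ℂ} :
    Rm a b ∈ specialUnitaryGroup (Fin 2) ℂ ↔ normSq a + normSq b = 1 := by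
  rw [mem_specialUnitaryGroup_iff, mem_unitaryGroup_iff, Rm_mul_star, det_Rm]
  exact ⟨fun h => by exact_mod_cast h.2, fun h => by simp [h]⟩

theorem eq_Rm_of_mem_specialUnitaryGroup {M : Matrix (Fin 2) (Fin 2) ℂ}
    (hM : M ∈ specialUnitaryGroup (Fin 2) ℂ) : M = Rm (M 0 0) (M 0 1) := by
  rw [mem_specialUnitaryGroup_iff, mem_unitaryGroup_iff] at hM
  have hstar : star M = M.adjugate := by
    rw [← inv_eq_right_inv hM.1, Matrix.inv_def, hM.2, Ring.inverse_one, one_smul]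
  rw [adjugate_fin_two] at hstar
  have h10 : conj (M 0 1) = -M 1 0 := by simpa using congrFun (congrFun hstar 1) 0
  have h11 : conj (M 0 0) = M 1 1 := by simpa using congrFun (congrFun hstar 0) 0
  ext i j
  fin_cases i <;> fin_cases j <;> simp [Rm, h10, h11]

theorem normSq_add_normSq_of_mem_specialUnitaryGroup {M : Matrix (Fin 2) (Fin 2) ℂ}
    (hM : M ∈ specialUnitaryGroup (Fin 2) ℂ) : normSq (M 0 0) + normSq (M 0 1) = 1 :=
  Rm_mem_specialUnitaryGroup_iff.mp (eq_Rm_of_mem_specialUnitaryGroup hM ▸ hM)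

theorem star_mem_specialUnitaryGroup {n α : Type*} [Fintype n] [DecidableEq n] [CommRing α]
    [StarRing α] {A : Matrix n n α} (hA : A ∈ specialUnitaryGroup n α) :
    star A ∈ specialUnitaryGroup n α := by
  rw [mem_specialUnitaryGroup_iff] at hA ⊢
  exact ⟨Unitary.star_mem hA.1, by rw [star_eq_conjTranspose, det_conjTranspose, hA.2, star_one]⟩

open scoped Matrix.Norms.Elementwise in
theorem isCompact_unitaryGroup {𝕜 n : Type*} [RCLike 𝕜] [Fintype n] [DecidableEq n] :
    IsCompact (unitaryGroup n 𝕜 : Set (Matrix n n 𝕜)) := by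
  refine Metric.isCompact_of_isClosed_isBounded ?_ ?_
  · rw [show (unitaryGroup n 𝕜 : Set (Matrix n n 𝕜)) = {U | U * star U = 1} from
      Set.ext fun _ => mem_unitaryGroup_iff]
    exact isClosed_eq (by fun_prop) continuous_const
  · exact isBounded_iff_forall_norm_le.2 ⟨1, fun U hU => entrywise_sup_norm_bound_of_unitary hU⟩

theorem isCompact_specialUnitaryGroup {𝕜 n : Type*} [RCLike 𝕜] [Fintype n] [DecidableEq n] :
    IsCompact (specialUnitaryGroup n 𝕜 : Set (Matrix n n 𝕜)) :=
  isCompact_unitaryGroup.inter_right <|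
    isClosed_eq (f := fun A : Matrix n n 𝕜 => A.det) (by fun_prop) continuous_const

instance : CompactSpace SU2 := isCompact_iff_compactSpace.mp isCompact_specialUnitaryGroup

def hopf (M : Matrix (Fin 2) (Fin 2) ℂ) : ℝ × ℂ := (1 - 2 * normSq (M 0 0), 2 * M 0 0 * M 0 1)

theorem hopf_Rm (a b : ℂ) : hopf (Rm a b) = (1 - 2 * normSq a, 2 * a * b) := rfl

theorem continuous_hopf : Continuous hopf := by unfold hopf; fun_prop

theorem hopf_mul_Rm (M : Matrix (Fin 2) (Fin 2) ℂ) {z : ℂ} (hz : ‖z‖ = 1) :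
    hopf (M * Rm z 0) = hopf M := by
  have hz' : normSq z = 1 := by rw [normSq_eq_norm_sq, hz, one_pow]
  have hzz : z * conj z = 1 := by rw [mul_conj, hz', ofReal_one]
  simp only [hopf, Rm, mul_apply, Fin.sum_univ_two, of_apply, cons_val', cons_val_zero,
    cons_val_one, empty_val', cons_val_fin_one, map_zero, neg_zero, mul_zero, zero_add, add_zero,
    normSq_mul, hz', mul_one, Prod.mk.injEq, true_and]
  linear_combination 2 * M 0 0 * M 0 1 * hzz

theorem hopf_fst_sq_add_normSq_snd {M : Matrix (Fin 2) (Fin 2) ℂ}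
    (h : normSq (M 0 0) + normSq (M 0 1) = 1) : (hopf M).1 ^ 2 + normSq (hopf M).2 = 1 := by
  simp only [hopf, normSq_mul, normSq_ofNat]
  linear_combination 4 * normSq (M 0 0) * h

theorem conj_mul_eq_mul_conj_of_normSq_eq {a b a' b' : ℂ} (hn : normSq a = normSq a')
    (hp : a * b = a' * b') : conj a * b' = b * conj a' := by
  by_cases ha : a = 0
  · have ha' : a' = 0 := by rwa [← normSq_eq_zero, ← hn, normSq_eq_zero]
    simp [ha, ha']
  · refine mul_left_cancel₀ ha ?_
    linear_combination b' * mul_conj a - conj a' * hp - b' * mul_conj a' + b' * congrArg ofReal hn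

theorem exists_eq_mul_Rm_of_hopf_eq {M M' : Matrix (Fin 2) (Fin 2) ℂ}
    (hM : M ∈ specialUnitaryGroup (Fin 2) ℂ) (hM' : M' ∈ specialUnitaryGroup (Fin 2) ℂ)
    (h : hopf M = hopf M') : ∃ z : ℂ, ‖z‖ = 1 ∧ M' = M * Rm z 0 := by
  have hN : star M * M' ∈ specialUnitaryGroup (Fin 2) ℂ :=
    mul_mem (star_mem_specialUnitaryGroup hM) hM'
  have hN01 : (star M * M') 0 1 = 0 := by
    obtain ⟨a, b, rfl⟩ : ∃ a b, M = Rm a b := ⟨_, _, eq_Rm_of_mem_specialUnitaryGroup hM⟩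
    obtain ⟨a', b', rfl⟩ : ∃ a b, M' = Rm a b := ⟨_, _, eq_Rm_of_mem_specialUnitaryGroup hM'⟩
    rw [hopf_Rm, hopf_Rm] at h
    obtain ⟨h1, h2⟩ := Prod.mk.inj h
    have hn : normSq a = normSq a' := by linarith
    have hp : a * b = a' * b' := by linear_combination h2 / 2
    simp [Rm, mul_apply, Fin.sum_univ_two, conj_mul_eq_mul_conj_of_normSq_eq hn hp]
  have hN_eq : star M * M' = Rm ((star M * M') 0 0) 0 :=
    hN01 ▸ eq_Rm_of_mem_specialUnitaryGroup hN
  have hz : normSq ((star M * M') 0 0) = 1 := by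
    rwa [hN_eq, Rm_mem_specialUnitaryGroup_iff, map_zero, add_zero] at hN
  refine ⟨(star M * M') 0 0, by rw [Complex.norm_def, hz, Real.sqrt_one], ?_⟩
  rw [← hN_eq, ← mul_assoc, mem_unitaryGroup_iff.mp hM.1, one_mul]

theorem exists_Rm_hopf_eq {t : ℝ} {v : ℂ} (h : t ^ 2 + normSq v = 1) :
    ∃ a b : ℂ, normSq a + normSq b = 1 ∧ hopf (Rm a b) = (t, v) := by
  rcases eq_or_ne t 1 with rfl | ht
  · have hv : v = 0 := by rw [← normSq_eq_zero]; linarith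
    exact ⟨0, 1, by simp, by simp [hopf_Rm, hv]⟩
  · have ht' : t < 1 := lt_of_le_of_ne (by nlinarith [normSq_nonneg v]) ht
    set r := √((1 - t) / 2)
    have hr2 : r ^ 2 = (1 - t) / 2 := Real.sq_sqrt (by linarith)
    have hr : r ≠ 0 := (Real.sqrt_pos.2 (by linarith)).ne'
    refine ⟨r, v / (2 * r), ?_, ?_⟩
    · rw [normSq_ofReal, normSq_div, normSq_mul, normSq_ofNat, normSq_ofReal]
      field_simp
      linear_combination (4 * r ^ 2 + 2 * (1 - t) - 4) * hr2 + h
    · rw [hopf_Rm, normSq_ofReal, ← sq, hr2]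
      have hr' : (r : ℂ) ≠ 0 := ofReal_ne_zero.2 hr
      ext
      · ring
      · field_simp

def hopfSU2 (M : SU2) : S2 :=
  ⟨hopf M, hopf_fst_sq_add_normSq_snd (normSq_add_normSq_of_mem_specialUnitaryGroup M.2)⟩

theorem continuous_hopfSU2 : Continuous hopfSU2 :=
  (continuous_hopf.comp continuous_subtype_val).subtype_mk _

theorem hopfSU2_eq_iff {A B : SU2} : hopfSU2 A = hopfSU2 B ↔ cosetSetoid A B := by
  refine ⟨fun h => exists_eq_mul_Rm_of_hopf_eq A.2 B.2 (congrArg Subtype.val h), ?_⟩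
  rintro ⟨z, hz, hB⟩
  exact Subtype.ext (by simp only [hopfSU2, hB, hopf_mul_Rm _ hz])

theorem hopfSU2_surjective : Function.Surjective hopfSU2 := by
  rintro ⟨⟨t, v⟩, h⟩
  obtain ⟨a, b, hab, hopf_eq⟩ := exists_Rm_hopf_eq h
  exact ⟨⟨Rm a b, Rm_mem_specialUnitaryGroup_iff.2 hab⟩, Subtype.ext hopf_eq⟩

def hopfQuotient : Quotient cosetSetoid → S2 :=
  Quotient.lift hopfSU2 fun _ _ h => hopfSU2_eq_iff.2 h

theorem hopfQuotient_bijective : Function.Bijective hopfQuotient := by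
  refine ⟨fun x y => Quotient.inductionOn₂ x y fun A B h => Quotient.sound (hopfSU2_eq_iff.1 h),
    fun p => ?_⟩
  obtain ⟨A, hA⟩ := hopfSU2_surjective p
  exact ⟨⟦A⟧, hA⟩

/-- The map sending the coset `R(r,w)·S¹` (with `r ≥ 0`, `r² + |w|² = 1`) to
`(1 - 2r², 2rw)` is a well-defined homeomorphism `SU(2)/S¹ ≅ S²`. -/
theorem stmt2 :
    ∃ h : Quotient cosetSetoid ≃ₜ S2,
      ∀ (r : ℝ) (w : ℂ) (hr : 0 ≤ r)
        (hmem : Rm (r : ℂ) w ∈ Matrix.specialUnitaryGroup (Fin 2) ℂ),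
        ((h (Quotient.mk cosetSetoid ⟨Rm (r : ℂ) w, hmem⟩) : S2) : ℝ × ℂ) =
          (1 - 2 * r ^ 2, 2 * (r : ℂ) * w) := by
  have hcont : Continuous hopfQuotient := continuous_hopfSU2.quotient_lift _
  refine ⟨hcont.homeoOfEquivCompactToT2 (f := Equiv.ofBijective _ hopfQuotient_bijective), ?_⟩
  intro r w _ hmem
  show hopf (Rm r w) = _
  rw [hopf_Rm, normSq_ofReal, sq]
end

section
/- Let R(rz,u) be embedded in an N×N identity matrix at rows/columns (p,q), and let d(x) = diag-embedding of R(x,0) at the same positions (p,q). Then the embedded R(rz,u) times the embedded R(x,0) equals the embedded R(x,0) times the embedded R(rz, x̄²u). -/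
open Complex Matrix

/-! Embedded blocks multiply like the quaternions `a + b j`, so both sides are the embedding of
`R(rz·x, x̄u)`: on the right `x · x̄² u = x̄ u` because `x x̄ = 1`. -/

/-- The `N×N` matrix equal to the identity except that the `SU(2)`-matrix `R(a,b)`
(rows `(a,b)`, `(-b̄,ā)`) is embedded in rows/columns `p, q`. -/
def embedR (N : ℕ) (a b : ℂ) (p q : Fin N) : Matrix (Fin N) (Fin N) ℂ :=
  fun i j =>
    if i = p ∧ j = p then a
    else if i = p ∧ j = q then b
    else if i = q ∧ j = p then -(starRingEnd ℂ) b
    else if i = q ∧ j = q then (starRingEnd ℂ) a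
    else if i = j then 1 else 0

section
variable {N : ℕ} {a b c d : ℂ} {p q i j : Fin N}

lemma embedR_apply_of_row_ne (hip : i ≠ p) (hiq : i ≠ q) :
    embedR N a b p q i j = if i = j then 1 else 0 := by
  simp [embedR, hip, hiq]

lemma embedR_apply_of_col_ne (hjp : j ≠ p) (hjq : j ≠ q) :
    embedR N a b p q i j = if i = j then 1 else 0 := by
  simp [embedR, hjp, hjq]

theorem embedR_mul_embedR (hpq : p ≠ q) :
    embedR N a b p q * embedR N c d p q =
      embedR N (a * c - b * starRingEnd ℂ d) (a * d + b * starRingEnd ℂ c) p q := by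
  ext i j
  rw [mul_apply]
  by_cases hi : i = p ∨ i = q
  · rw [Finset.sum_eq_add p q hpq (fun k _ hk => by
        rw [embedR_apply_of_col_ne hk.1 hk.2, if_neg (by rintro rfl; tauto), zero_mul])
        (by simp) (by simp)]
    by_cases hj : j = p ∨ j = q
    · rcases hi with rfl | rfl <;> rcases hj with rfl | rfl <;>
        simp [embedR, hpq, hpq.symm] <;> ring
    · obtain ⟨hjp, hjq⟩ : j ≠ p ∧ j ≠ q := not_or.mp hj
      simp only [embedR_apply_of_col_ne hjp hjq, if_neg hjp.symm, if_neg hjq.symm, mul_zero,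
        add_zero]
      rcases hi with rfl | rfl
      · exact (if_neg hjp.symm).symm
      · exact (if_neg hjq.symm).symm
  · obtain ⟨hip, hiq⟩ : i ≠ p ∧ i ≠ q := not_or.mp hi
    simp only [embedR_apply_of_row_ne hip hiq, ite_mul, one_mul, zero_mul,
      Finset.sum_ite_eq, Finset.mem_univ, if_true]
end

theorem stmt5_general (N : ℕ) (r : ℝ) (z u x : ℂ) (hx : ‖x‖ = 1)
    (p q : Fin N) (hpq : p < q) :
    embedR N ((r : ℂ) * z) u p q * embedR N x 0 p q =
      embedR N x 0 p q * embedR N ((r : ℂ) * z) ((starRingEnd ℂ x) ^ 2 * u) p q := by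
  have hxx : x * starRingEnd ℂ x = 1 := by
    rw [mul_conj, normSq_eq_norm_sq, hx]; norm_num
  rw [embedR_mul_embedR hpq.ne, embedR_mul_embedR hpq.ne]
  congr 1
  · simp only [map_zero, mul_zero, zero_mul, sub_zero]
    ring
  · linear_combination (-(starRingEnd ℂ x * u)) * hxx

/-- Lemma 1(ii): with `R(rz,u)` and `d(x) = R(x,0)` embedded at the same positions `(p,q)`,
`R(rz,u)·R(x,0) = R(x,0)·R(rz, x̄²u)`. -/
theorem stmt5 (N : ℕ) (r : ℝ) (z u x : ℂ) (hr : 0 ≤ r) (hz : ‖z‖ = 1) (hx : ‖x‖ = 1)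
    (p q : Fin N) (hpq : p < q) :
    embedR N ((r : ℂ) * z) u p q * embedR N x 0 p q =
      embedR N x 0 p q * embedR N ((r : ℂ) * z) ((starRingEnd ℂ x) ^ 2 * u) p q :=
  stmt5_general N r z u x hx p q hpq
end

section
/- Consider matrices R⁽ʲ⁾(rⱼ, wⱼ) for j = 1,…,s, where R⁽ʲ⁾ is the N×N embedding of R(rⱼ, wⱼ) at positions (j, s+1) in a nested configuration with a₁=0, aⱼ₊₁=aⱼ+1, so that the product R⁽¹⁾(r₁,w₁)⋯R⁽ˢ⁾(rₛ,wₛ) has first column entries: a₁₁ = r₁⋯rₛ, a_{j1} = -r_{j+1}⋯rₛ·w̄ⱼ for 1 ≤ j ≤ s-1, a_{s1} = -w̄ₛ, and a_{k1} = 0 for k > s. -/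
/-!
Left multiplication by `R⁽ᵗ⁾`, whose block sits in rows `0` and `t`, is a row operation on
rows `0` and `t` only. Peeling the factors off from the left, the first column of
`R⁽ᵗ⁺¹⁾⋯R⁽ʰⁱ⁾` is `(r_{t+1}⋯r_{hi}, 0, …, 0, -w̄_{t+1}·r_{t+2}⋯r_{hi}, …, -w̄_{hi}, 0, …)`
(`chainColumn r w t hi`), by induction on the number of factors: row `t` of the shorter
product's first column vanishes, so the row operation only rescales entry `0` by `r_t` and
writes `-w̄_t` times it into row `t`.
-/

open Complex Matrix

theorem embedR_mul_apply {N : ℕ} (a b : ℂ) {p q : Fin N} (hpq : p ≠ q)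
    (A : Matrix (Fin N) (Fin N) ℂ) (i j : Fin N) :
    (embedR N a b p q * A) i j =
      if i = p then a * A p j + b * A q j
      else if i = q then -(starRingEnd ℂ) b * A p j + (starRingEnd ℂ) a * A q j
      else A i j := by
  rw [Matrix.mul_apply]
  split_ifs with hip hiq
  · rw [hip, Fintype.sum_eq_add p q hpq fun k hk => by simp [embedR, hk.1, hk.2, Ne.symm hk.1]]
    simp [embedR, hpq.symm]
  · rw [hiq, Fintype.sum_eq_add p q hpq fun k hk => by simp [embedR, hk.1, hk.2, Ne.symm hk.2]]
    simp [embedR, hpq.symm]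
  · rw [Fintype.sum_eq_single i fun k hk => by simp [embedR, hip, hiq, Ne.symm hk]]
    simp [embedR, hip, hiq]

def chainColumn (r : ℕ → ℝ) (w : ℕ → ℂ) (lo hi i : ℕ) : ℂ :=
  if i = 0 then ∏ k ∈ Finset.Icc (lo + 1) hi, (r k : ℂ)
  else if lo + 1 ≤ i ∧ i ≤ hi then -(starRingEnd ℂ) (w i) * ∏ k ∈ Finset.Icc (i + 1) hi, (r k : ℂ)
  else 0

theorem chainColumn_self (r : ℕ → ℝ) (w : ℕ → ℂ) (t i : ℕ) :
    chainColumn r w t t i = if i = 0 then 1 else 0 := by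
  unfold chainColumn
  split_ifs <;> first | omega | simp

theorem chainColumn_step (r : ℕ → ℝ) (w : ℕ → ℂ) {t hi : ℕ} (ht : t + 1 ≤ hi) (i : ℕ) :
    chainColumn r w t hi i =
      if i = 0 then r (t + 1) * chainColumn r w (t + 1) hi 0
      else if i = t + 1 then -(starRingEnd ℂ) (w (t + 1)) * chainColumn r w (t + 1) hi 0
      else chainColumn r w (t + 1) hi i := by
  have hprod : ∏ k ∈ Finset.Icc (t + 1) hi, (r k : ℂ) =
      r (t + 1) * ∏ k ∈ Finset.Icc (t + 1 + 1) hi, (r k : ℂ) := by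
    rw [Finset.Icc_eq_cons_Ioc ht, Finset.prod_cons, Finset.Icc_add_one_left_eq_Ioc]
  unfold chainColumn
  split_ifs <;> first | omega | simp_all

theorem prod_embedR_chain_apply_zero {N : ℕ} (hN : 0 < N) (r : ℕ → ℝ) (w : ℕ → ℂ) (m t : ℕ)
    (htm : t + m < N) (i : Fin N) :
    (List.ofFn fun j : Fin m => embedR N (r (t + j + 1)) (w (t + j + 1))
        ⟨0, hN⟩ ⟨t + j + 1, by omega⟩).prod i ⟨0, hN⟩ =
      chainColumn r w t (t + m) i := by
  induction m generalizing t i with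
  | zero => simp [Matrix.one_apply, chainColumn_self, Fin.ext_iff]
  | succ m ih =>
    have hshift (j : ℕ) : t + (j + 1) + 1 = t + 1 + j + 1 := by omega
    rw [List.ofFn_succ, List.prod_cons, embedR_mul_apply _ _ (by simp [Fin.ext_iff]),
      chainColumn_step r w (by omega)]
    simp only [Fin.val_succ, Fin.val_zero, add_zero, hshift, ih (t + 1) (by omega),
      Fin.ext_iff]
    have hlo : chainColumn r w (t + 1) (t + (m + 1)) (t + 1) = 0 := by simp [chainColumn]
    rw [show t + 1 + m = t + (m + 1) by omega, hlo]
    simp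

/-- Equation (**) of Lemma 2: in the chained configuration where `R⁽ʲ⁾` embeds `R(rⱼ,wⱼ)`
in the rows/columns shared in a chain (blocks at positions `(0, j)` for `j = 1,…,s`),
the first column of the product `R⁽¹⁾(r₁,w₁)⋯R⁽ˢ⁾(rₛ,wₛ)` is
`(r₁⋯rₛ, -r₂⋯rₛ·w̄₁, …, -rₛ·w̄_{s-1}, -w̄ₛ, 0, …, 0)`. -/
theorem stmt7 (N s : ℕ) (hN : s < N) (r : ℕ → ℝ) (w : ℕ → ℂ)
    (P : Matrix (Fin N) (Fin N) ℂ)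
    (hP : P = (List.ofFn (fun j : Fin s =>
      embedR N ((r (j.1 + 1) : ℝ) : ℂ) (w (j.1 + 1))
        ⟨0, by omega⟩ ⟨j.1 + 1, by have := j.isLt; omega⟩)).prod) :
    P ⟨0, by omega⟩ ⟨0, by omega⟩ = ∏ j ∈ Finset.Icc 1 s, ((r j : ℝ) : ℂ) ∧
    (∀ j, 1 ≤ j → (hj : j ≤ s) → P ⟨j, by omega⟩ ⟨0, by omega⟩ =
      -((starRingEnd ℂ) (w j)) * ∏ k ∈ Finset.Icc (j + 1) s, ((r k : ℝ) : ℂ)) ∧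
    (∀ k, (hk : k < N) → s < k → P ⟨k, hk⟩ ⟨0, by omega⟩ = 0) := by
  have hcol (i : Fin N) : P i ⟨0, by omega⟩ = chainColumn r w 0 s i := by
    simpa [hP] using prod_embedR_chain_apply_zero (by omega) r w s 0 (by omega) i
  refine ⟨?_, fun j hj₁ hj => ?_, fun k hk hsk => ?_⟩
  · simp [hcol, chainColumn]
  · simp [hcol, chainColumn, hj₁, hj, show j ≠ 0 by omega]
  · simp [hcol, chainColumn, hsk.not_ge, show k ≠ 0 by omega]
end
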